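/- arXiv:0812.1363 — 2 statements merged into one kernel-verified Lean document; each statement's English description precedes it below -/
import Mathlib

section
/- Let ε > 0, let λ ∈ ℝ be such that ε ∫_0^m exp(−∫_0^s (λ+γ'+μ)/γ) ∫_0^s (1/γ(y)) exp(∫_0^y (λ+γ'+μ)/γ) dy ds < 1, and let f : [0,m] → ℝ be continuous with f ≥ 0. Then there is a unique continuously differentiable u : [0,m] → ℝ with u(0) = 0 satisfying λu(s) + (γu)'(s) + μ(s)u(s) − ε∫_0^m u(y) dy = f(s) for all s ∈ [0,m], and this u is nonnegative. (Positivity of the resolvent of the rank-one perturbed transport operator.) -/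
open Set MeasureTheory intervalIntegral Filter

/-!
Dividing by `γ > 0` turns the resolvent equation into the nonlocal linear ODE
`u' + a u = f / γ + ε (∫₀ᵐ u) / γ` with `a = (λ + γ' + μ) / γ`. Variation of constants `T`
solves `u' + a u = g`, `u 0 = 0` uniquely, and is linear and positivity preserving in `g`.
Hence a solution with `∫₀ᵐ u = c` is `T (f / γ) + ε c T (1 / γ)`, and integrating gives
`c (1 - ε ∫₀ᵐ T (1 / γ)) = ∫₀ᵐ T (f / γ)`. The characteristic condition says that the factor
on the left is positive, so `c` is unique and nonnegative, and then so is `u`.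
-/

theorem hasDerivWithinAt_integral_Icc {a b x : ℝ} {h : ℝ → ℝ} (hh : ContinuousOn h (Icc a b))
    (hx : x ∈ Icc a b) : HasDerivWithinAt (fun s => ∫ t in a..s, h t) (h x) (Icc a b) x := by
  have : Fact (x ∈ Icc a b) := ⟨hx⟩
  exact integral_hasDerivWithinAt_right
    ((hh.mono (uIcc_subset_Icc (left_mem_Icc.2 (hx.1.trans hx.2)) hx)).intervalIntegrable)
    (hh.stronglyMeasurableAtFilter_nhdsWithin measurableSet_Icc x) (hh x hx)

/-- The solution of `u' + a u = g`, `u 0 = 0`, by variation of constants. -/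
noncomputable def variationOfConstants (a g : ℝ → ℝ) (s : ℝ) : ℝ :=
  Real.exp (-∫ σ in (0:ℝ)..s, a σ) * ∫ y in (0:ℝ)..s, g y * Real.exp (∫ σ in (0:ℝ)..y, a σ)

section VariationOfConstants

variable {m : ℝ} {a g : ℝ → ℝ}

@[simp]
theorem variationOfConstants_zero : variationOfConstants a g 0 = 0 := by
  simp [variationOfConstants]

theorem variationOfConstants_nonneg {s : ℝ} (hs : 0 ≤ s) (hg : ∀ y ∈ Icc 0 s, 0 ≤ g y) :
    0 ≤ variationOfConstants a g s :=
  mul_nonneg (Real.exp_pos _).le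
    (integral_nonneg hs fun y hy => mul_nonneg (hg y hy) (Real.exp_pos _).le)

theorem continuousOn_mul_exp_integral (ha : ContinuousOn a (Icc 0 m))
    (hg : ContinuousOn g (Icc 0 m)) :
    ContinuousOn (fun y => g y * Real.exp (∫ σ in (0:ℝ)..y, a σ)) (Icc 0 m) :=
  hg.mul fun _ hy => (hasDerivWithinAt_integral_Icc ha hy).continuousWithinAt.rexp

theorem hasDerivWithinAt_variationOfConstants (ha : ContinuousOn a (Icc 0 m))
    (hg : ContinuousOn g (Icc 0 m)) {s : ℝ} (hs : s ∈ Icc 0 m) :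
    HasDerivWithinAt (variationOfConstants a g) (g s - a s * variationOfConstants a g s)
      (Icc 0 m) s := by
  refine (((hasDerivWithinAt_integral_Icc ha hs).neg.exp).mul
    (hasDerivWithinAt_integral_Icc (continuousOn_mul_exp_integral ha hg) hs)).congr_deriv ?_
  simp only [variationOfConstants, Pi.neg_apply, Real.exp_neg]
  field_simp
  ring

theorem continuousOn_variationOfConstants (ha : ContinuousOn a (Icc 0 m))
    (hg : ContinuousOn g (Icc 0 m)) : ContinuousOn (variationOfConstants a g) (Icc 0 m) :=
  fun _ hs => (hasDerivWithinAt_variationOfConstants ha hg hs).continuousWithinAt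

theorem eqOn_variationOfConstants (ha : ContinuousOn a (Icc 0 m))
    (hg : ContinuousOn g (Icc 0 m)) {v : ℝ → ℝ} (hv0 : v 0 = 0)
    (hv : ∀ s ∈ Icc 0 m, HasDerivWithinAt v (g s - a s * v s) (Icc 0 m) s) :
    EqOn v (variationOfConstants a g) (Icc 0 m) := by
  set E : ℝ → ℝ := fun s => Real.exp (∫ σ in (0:ℝ)..s, a σ)
  have hE : ∀ s ∈ Icc 0 m, HasDerivWithinAt E (E s * a s) (Icc 0 m) s :=
    fun s hs => (hasDerivWithinAt_integral_Icc ha hs).exp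
  have hEv : ∀ s ∈ Icc 0 m, HasDerivWithinAt (fun s => E s * v s) (g s * E s) (Icc 0 m) s := by
    intro s hs
    exact ((hE s hs).mul (hv s hs)).congr_deriv (by ring)
  have hP := fun s (hs : s ∈ Icc 0 m) =>
    hasDerivWithinAt_integral_Icc (continuousOn_mul_exp_integral ha hg) hs
  have key : ∀ s ∈ Icc 0 m, E s * v s = ∫ y in (0:ℝ)..s, g y * E y :=
    eq_of_has_deriv_right_eq
      (fun s hs => (hEv s (Ico_subset_Icc_self hs)).mono_of_mem_nhdsWithin
        (Icc_mem_nhdsGE_of_mem hs))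
      (fun s hs => (hP s (Ico_subset_Icc_self hs)).mono_of_mem_nhdsWithin
        (Icc_mem_nhdsGE_of_mem hs))
      (fun s hs => (hEv s hs).continuousWithinAt) (fun s hs => (hP s hs).continuousWithinAt)
      (by simp [hv0])
  intro s hs
  rw [variationOfConstants, ← key s hs, Real.exp_neg, inv_mul_cancel_left₀ (Real.exp_pos _).ne']

theorem variationOfConstants_add_const_mul {h : ℝ → ℝ} (ha : ContinuousOn a (Icc 0 m))
    (hg : ContinuousOn g (Icc 0 m)) (hh : ContinuousOn h (Icc 0 m)) (c : ℝ) {s : ℝ}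
    (hs : s ∈ Icc 0 m) :
    variationOfConstants a (fun y => g y + c * h y) s =
      variationOfConstants a g s + c * variationOfConstants a h s := by
  have hint : ∀ {k : ℝ → ℝ}, ContinuousOn k (Icc 0 m) →
      IntervalIntegrable (fun y => k y * Real.exp (∫ σ in (0:ℝ)..y, a σ)) volume 0 s :=
    fun hk => ((continuousOn_mul_exp_integral ha hk).mono
      (uIcc_subset_Icc (left_mem_Icc.2 (hs.1.trans hs.2)) hs)).intervalIntegrable
  simp only [variationOfConstants, add_mul, mul_assoc, integral_add (hint hg) ((hint hh).const_mul c),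
    intervalIntegral.integral_const_mul]
  ring

theorem integral_variationOfConstants_add_const_mul (hm : 0 ≤ m) {h : ℝ → ℝ}
    (ha : ContinuousOn a (Icc 0 m)) (hg : ContinuousOn g (Icc 0 m))
    (hh : ContinuousOn h (Icc 0 m)) (c : ℝ) :
    ∫ s in (0:ℝ)..m, variationOfConstants a (fun y => g y + c * h y) s =
      (∫ s in (0:ℝ)..m, variationOfConstants a g s) +
        c * ∫ s in (0:ℝ)..m, variationOfConstants a h s := by
  rw [integral_congr fun s hs =>
      variationOfConstants_add_const_mul ha hg hh c (uIcc_of_le hm ▸ hs),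
    integral_add ((continuousOn_variationOfConstants ha hg).intervalIntegrable_of_Icc hm)
      (((continuousOn_variationOfConstants ha hh).const_mul c).intervalIntegrable_of_Icc hm),
    intervalIntegral.integral_const_mul]

end VariationOfConstants

/-- The solution of `u' + a u = g + ε (∫₀ᵐ u) h`, `u 0 = 0`, provided `ε ∫₀ᵐ T h ≠ 1`
where `T = variationOfConstants a`; its integral `c` solves `c = ∫₀ᵐ T g + ε c ∫₀ᵐ T h`. -/
noncomputable def rankOneSolution (m ε : ℝ) (a g h : ℝ → ℝ) : ℝ → ℝ :=
  variationOfConstants a fun y =>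
    g y + ε * ((∫ s in (0:ℝ)..m, variationOfConstants a g s) /
      (1 - ε * ∫ s in (0:ℝ)..m, variationOfConstants a h s)) * h y

section RankOne

variable {m ε : ℝ} {a g h : ℝ → ℝ}

theorem integral_rankOneSolution (hm : 0 ≤ m) (ha : ContinuousOn a (Icc 0 m))
    (hg : ContinuousOn g (Icc 0 m)) (hh : ContinuousOn h (Icc 0 m))
    (hκ : ε * ∫ s in (0:ℝ)..m, variationOfConstants a h s ≠ 1) :
    ∫ s in (0:ℝ)..m, rankOneSolution m ε a g h s =
      (∫ s in (0:ℝ)..m, variationOfConstants a g s) /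
        (1 - ε * ∫ s in (0:ℝ)..m, variationOfConstants a h s) := by
  rw [rankOneSolution, integral_variationOfConstants_add_const_mul hm ha hg hh]
  field_simp [sub_ne_zero.2 hκ.symm]
  ring

theorem hasDerivWithinAt_rankOneSolution (hm : 0 ≤ m) (ha : ContinuousOn a (Icc 0 m))
    (hg : ContinuousOn g (Icc 0 m)) (hh : ContinuousOn h (Icc 0 m))
    (hκ : ε * ∫ s in (0:ℝ)..m, variationOfConstants a h s ≠ 1) {s : ℝ} (hs : s ∈ Icc 0 m) :
    HasDerivWithinAt (rankOneSolution m ε a g h)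
      (g s + ε * (∫ y in (0:ℝ)..m, rankOneSolution m ε a g h y) * h s -
        a s * rankOneSolution m ε a g h s) (Icc 0 m) s := by
  rw [integral_rankOneSolution hm ha hg hh hκ]
  exact hasDerivWithinAt_variationOfConstants ha (hg.add (continuousOn_const.mul hh)) hs

theorem eqOn_rankOneSolution (hm : 0 ≤ m) (ha : ContinuousOn a (Icc 0 m))
    (hg : ContinuousOn g (Icc 0 m)) (hh : ContinuousOn h (Icc 0 m))
    (hκ : ε * ∫ s in (0:ℝ)..m, variationOfConstants a h s ≠ 1) {v : ℝ → ℝ} (hv0 : v 0 = 0)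
    (hv : ∀ s ∈ Icc 0 m,
      HasDerivWithinAt v (g s + ε * (∫ y in (0:ℝ)..m, v y) * h s - a s * v s) (Icc 0 m) s) :
    EqOn v (rankOneSolution m ε a g h) (Icc 0 m) := by
  set K := ∫ y in (0:ℝ)..m, v y
  have hvK : EqOn v (variationOfConstants a fun y => g y + ε * K * h y) (Icc 0 m) :=
    eqOn_variationOfConstants ha (hg.add (continuousOn_const.mul hh)) hv0 hv
  have hK : K = (∫ s in (0:ℝ)..m, variationOfConstants a g s) +
      ε * K * ∫ s in (0:ℝ)..m, variationOfConstants a h s := by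
    rw [← integral_variationOfConstants_add_const_mul hm ha hg hh]
    exact integral_congr fun s hs => hvK (uIcc_of_le hm ▸ hs)
  have hK' : K = (∫ s in (0:ℝ)..m, variationOfConstants a g s) /
      (1 - ε * ∫ s in (0:ℝ)..m, variationOfConstants a h s) := by
    rw [eq_div_iff (sub_ne_zero.2 hκ.symm)]
    linear_combination hK
  rwa [hK'] at hvK

theorem rankOneSolution_nonneg (hm : 0 ≤ m) (hε : 0 ≤ ε)
    (hκ : ε * ∫ s in (0:ℝ)..m, variationOfConstants a h s < 1)
    (hg : ∀ y ∈ Icc 0 m, 0 ≤ g y) (hh : ∀ y ∈ Icc 0 m, 0 ≤ h y) {s : ℝ} (hs : s ∈ Icc 0 m) :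
    0 ≤ rankOneSolution m ε a g h s := by
  have hc : 0 ≤ (∫ s in (0:ℝ)..m, variationOfConstants a g s) /
      (1 - ε * ∫ s in (0:ℝ)..m, variationOfConstants a h s) :=
    div_nonneg (integral_nonneg hm fun t ht =>
      variationOfConstants_nonneg ht.1 fun y hy => hg y (Icc_subset_Icc_right ht.2 hy))
      (sub_pos.2 hκ).le
  exact variationOfConstants_nonneg hs.1 fun y hy =>
    have hy : y ∈ Icc 0 m := Icc_subset_Icc_right hs.2 hy
    add_nonneg (hg y hy) (mul_nonneg (mul_nonneg hε hc) (hh y hy))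

end RankOne

theorem transport_eq_iff_deriv_eq {lam γ γ' μ ε K f v v' : ℝ} (hγ : γ ≠ 0) :
    lam * v + (γ' * v + γ * v') + μ * v - ε * K = f ↔
      v' = f / γ + ε * K * (1 / γ) - (lam + γ' + μ) / γ * v := by
  field_simp
  constructor <;> intro h <;> linear_combination h

theorem resolvent_positive_rank_one_general (m : ℝ) (hm : 0 < m)
    (γ γ' μ : ℝ → ℝ)
    (hγd : ∀ s ∈ Icc (0:ℝ) m, HasDerivWithinAt γ (γ' s) (Icc 0 m) s)
    (hγ'c : ContinuousOn γ' (Icc 0 m))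
    (hγpos : ∀ s ∈ Icc (0:ℝ) m, 0 < γ s)
    (hμc : ContinuousOn μ (Icc 0 m))
    (ε : ℝ) (hε : 0 < ε) (lam : ℝ)
    (hchar : ε * (∫ s in (0:ℝ)..m,
      Real.exp (-∫ σ in (0:ℝ)..s, (lam + γ' σ + μ σ) / γ σ) *
      ∫ y in (0:ℝ)..s, (1 / γ y) *
        Real.exp (∫ σ in (0:ℝ)..y, (lam + γ' σ + μ σ) / γ σ)) < 1)
    (f : ℝ → ℝ) (hfc : ContinuousOn f (Icc 0 m))
    (hfnn : ∀ s ∈ Icc (0:ℝ) m, 0 ≤ f s) :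
    ∃ u u' : ℝ → ℝ,
      ContinuousOn u' (Icc 0 m) ∧
      (∀ s ∈ Icc (0:ℝ) m, HasDerivWithinAt u (u' s) (Icc 0 m) s) ∧
      u 0 = 0 ∧
      (∀ s ∈ Icc (0:ℝ) m,
        lam * u s + (γ' s * u s + γ s * u' s) + μ s * u s
          - ε * ∫ y in (0:ℝ)..m, u y = f s) ∧
      (∀ s ∈ Icc (0:ℝ) m, 0 ≤ u s) ∧
      (∀ v v' : ℝ → ℝ, ContinuousOn v' (Icc 0 m) →
        (∀ s ∈ Icc (0:ℝ) m, HasDerivWithinAt v (v' s) (Icc 0 m) s) →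
        v 0 = 0 →
        (∀ s ∈ Icc (0:ℝ) m,
          lam * v s + (γ' s * v s + γ s * v' s) + μ s * v s
            - ε * ∫ y in (0:ℝ)..m, v y = f s) →
        ∀ s ∈ Icc (0:ℝ) m, v s = u s) := by
  set a : ℝ → ℝ := fun σ => (lam + γ' σ + μ σ) / γ σ
  have hγne : ∀ s ∈ Icc (0:ℝ) m, γ s ≠ 0 := fun s hs => (hγpos s hs).ne'
  have hγc : ContinuousOn γ (Icc 0 m) := fun s hs => (hγd s hs).continuousWithinAt
  have ha : ContinuousOn a (Icc 0 m) := ((continuousOn_const.add hγ'c).add hμc).div hγc hγne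
  have hg : ContinuousOn (fun y => f y / γ y) (Icc 0 m) := hfc.div hγc hγne
  have hh : ContinuousOn (fun y => 1 / γ y) (Icc 0 m) := continuousOn_const.div hγc hγne
  have hκ : ε * ∫ s in (0:ℝ)..m, variationOfConstants a (fun y => 1 / γ y) s < 1 := hchar
  set u := rankOneSolution m ε a (fun y => f y / γ y) fun y => 1 / γ y
  have hu := fun s (hs : s ∈ Icc 0 m) =>
    hasDerivWithinAt_rankOneSolution hm.le ha hg hh hκ.ne hs
  refine ⟨u, fun s => f s / γ s + ε * (∫ y in (0:ℝ)..m, u y) * (1 / γ s) - a s * u s,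
    (hg.add (continuousOn_const.mul hh)).sub (ha.mul fun s hs => (hu s hs).continuousWithinAt),
    hu, variationOfConstants_zero, fun s hs => (transport_eq_iff_deriv_eq (hγne s hs)).2 rfl,
    fun s => rankOneSolution_nonneg hm.le hε.le hκ (fun y hy => div_nonneg (hfnn y hy)
      (hγpos y hy).le) fun y hy => one_div_nonneg.2 (hγpos y hy).le,
    fun v v' _ hvd hv0 hveq => eqOn_rankOneSolution hm.le ha hg hh hκ.ne hv0 fun s hs => ?_⟩
  exact (transport_eq_iff_deriv_eq (hγne s hs)).1 (hveq s hs) ▸ hvd s hs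

/-- Positivity of the resolvent of the rank-one perturbed transport operator:
if the characteristic value at `λ` is below `1`, then for every continuous
`f ≥ 0` the resolvent equation has a unique continuously differentiable solution
with `u(0) = 0`, and this solution is nonnegative. -/
theorem resolvent_positive_rank_one (m : ℝ) (hm : 0 < m)
    (γ γ' μ : ℝ → ℝ)
    (hγd : ∀ s ∈ Icc (0:ℝ) m, HasDerivWithinAt γ (γ' s) (Icc 0 m) s)
    (hγ'c : ContinuousOn γ' (Icc 0 m))
    (hγpos : ∀ s ∈ Icc (0:ℝ) m, 0 < γ s)
    (hμc : ContinuousOn μ (Icc 0 m)) (hμnn : ∀ s ∈ Icc (0:ℝ) m, 0 ≤ μ s)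
    (ε : ℝ) (hε : 0 < ε) (lam : ℝ)
    (hchar : ε * (∫ s in (0:ℝ)..m,
      Real.exp (-∫ σ in (0:ℝ)..s, (lam + γ' σ + μ σ) / γ σ) *
      ∫ y in (0:ℝ)..s, (1 / γ y) *
        Real.exp (∫ σ in (0:ℝ)..y, (lam + γ' σ + μ σ) / γ σ)) < 1)
    (f : ℝ → ℝ) (hfc : ContinuousOn f (Icc 0 m))
    (hfnn : ∀ s ∈ Icc (0:ℝ) m, 0 ≤ f s) :
    ∃ u u' : ℝ → ℝ,
      ContinuousOn u' (Icc 0 m) ∧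
      (∀ s ∈ Icc (0:ℝ) m, HasDerivWithinAt u (u' s) (Icc 0 m) s) ∧
      u 0 = 0 ∧
      (∀ s ∈ Icc (0:ℝ) m,
        lam * u s + (γ' s * u s + γ s * u' s) + μ s * u s
          - ε * ∫ y in (0:ℝ)..m, u y = f s) ∧
      (∀ s ∈ Icc (0:ℝ) m, 0 ≤ u s) ∧
      (∀ v v' : ℝ → ℝ, ContinuousOn v' (Icc 0 m) →
        (∀ s ∈ Icc (0:ℝ) m, HasDerivWithinAt v (v' s) (Icc 0 m) s) →
        v 0 = 0 →
        (∀ s ∈ Icc (0:ℝ) m,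
          lam * v s + (γ' s * v s + γ s * v' s) + μ s * v s
            - ε * ∫ y in (0:ℝ)..m, v y = f s) →
        ∀ s ∈ Icc (0:ℝ) m, v s = u s) :=
  resolvent_positive_rank_one_general m hm γ γ' μ hγd hγ'c hγpos hμc ε hε lam hchar f hfc hfnn
end

section
/- Let λ ∈ ℂ. Define F(λ,s) = exp(−∫_0^s (λ+γ'(y)+μ(y))/γ(y) dy), and set a1(λ) = −∫_0^m F(λ,s)∫_0^s g(y)/F(λ,y) dy ds, a2(λ) = −∫_0^m F(λ,s)∫_0^s b1(y)/(γ(y)F(λ,y)) dy ds, a3(λ) = −∫_0^m b2(s)F(λ,s)∫_0^s g(y)/F(λ,y) dy ds, a4(λ) = −∫_0^m b2(s)F(λ,s)∫_0^s b1(y)/(γ(y)F(λ,y)) dy ds. Then there exists a continuously differentiable U : [0,m] → ℂ, not identically zero, with U(0) = 0 and γ(s)U'(s) + (λ+γ'(s)+μ(s))U(s) = γ(s)g(s)·∫_0^m U(y) dy + b1(s)·∫_0^m b2(y)U(y) dy for all s ∈ [0,m], if and only if (1+a1(λ))(1+a4(λ)) − a2(λ)a3(λ) = 0. -/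
/-!
With `q = (λ + γ' + μ) / γ` the eigenvalue equation reads `U' = -q U + c₁ g + c₂ b1 / γ`, where
`c₁ = ∫ U` and `c₂ = ∫ b2 U`. Multiplying by the integrating factor `F = exp (-∫ q)` shows that the
only solution with `U 0 = 0` is `U = F ∫ (c₁ g + c₂ b1 / γ) / F`; integrating it against `1` and
`b2` turns the definition of `(c₁, c₂)` into the homogeneous linear system with matrix
`1 + (aᵢⱼ)`. Nonzero eigenfunctions and nonzero solutions of that system determine each other, so
an eigenfunction exists iff the determinant vanishes. The same argument works for any finite-rank
nonlocal term `∑ⱼ (∫ wⱼ U) hⱼ`.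
-/

open Set intervalIntegral
open scoped Matrix

theorem hasDerivWithinAt_integral_Icc_s11 {E : Type*} [NormedAddCommGroup E] [NormedSpace ℝ E]
    [CompleteSpace E] {f : ℝ → E} {a b x : ℝ} (hf : ContinuousOn f (Icc a b))
    (hx : x ∈ Icc a b) :
    HasDerivWithinAt (fun u => ∫ y in a..u, f y) (f x) (Icc a b) x :=
  have : Fact (x ∈ Icc a b) := ⟨hx⟩
  integral_hasDerivWithinAt_right
    ((hf.mono (Icc_subset_Icc_right hx.2)).intervalIntegrable_of_Icc hx.1)
    (hf.stronglyMeasurableAtFilter_nhdsWithin measurableSet_Icc x) (hf x hx)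

section LinearODE

variable {a b : ℝ} {q r U V : ℝ → ℂ}

noncomputable def integratingFactor (a : ℝ) (q : ℝ → ℂ) (s : ℝ) : ℂ :=
  Complex.exp (-∫ y in a..s, q y)

theorem integratingFactor_ne_zero (a : ℝ) (q : ℝ → ℂ) (s : ℝ) : integratingFactor a q s ≠ 0 :=
  Complex.exp_ne_zero _

theorem hasDerivWithinAt_integratingFactor (hq : ContinuousOn q (Icc a b)) {x : ℝ}
    (hx : x ∈ Icc a b) :
    HasDerivWithinAt (integratingFactor a q) (-q x * integratingFactor a q x) (Icc a b) x := by
  rw [mul_comm]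
  exact (hasDerivWithinAt_integral_Icc_s11 hq hx).fun_neg.cexp

noncomputable def forcedSolution (a : ℝ) (q r : ℝ → ℂ) (s : ℝ) : ℂ :=
  integratingFactor a q s * ∫ y in a..s, r y / integratingFactor a q y

theorem forcedSolution_self (a : ℝ) (q r : ℝ → ℂ) : forcedSolution a q r a = 0 := by
  simp [forcedSolution]

theorem hasDerivWithinAt_forcedSolution (hq : ContinuousOn q (Icc a b))
    (hr : ContinuousOn r (Icc a b)) {x : ℝ} (hx : x ∈ Icc a b) :
    HasDerivWithinAt (forcedSolution a q r) (-q x * forcedSolution a q r x + r x) (Icc a b) x := by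
  have hF := hasDerivWithinAt_integratingFactor hq hx
  have hFc : ContinuousOn (integratingFactor a q) (Icc a b) :=
    fun y hy => (hasDerivWithinAt_integratingFactor hq hy).continuousWithinAt
  have hP : HasDerivWithinAt (fun u => ∫ y in a..u, r y / integratingFactor a q y)
      (r x / integratingFactor a q x) (Icc a b) x :=
    hasDerivWithinAt_integral_Icc_s11 (hr.div hFc fun y _ => integratingFactor_ne_zero a q y) hx
  refine (hF.mul hP).congr_deriv ?_
  have := integratingFactor_ne_zero a q x
  simp only [forcedSolution]
  field_simp

/-- `(U - V) / integratingFactor a q` has derivative zero. -/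
theorem eqOn_Icc_of_hasDerivWithinAt_linear (hq : ContinuousOn q (Icc a b))
    (hU : ∀ x ∈ Icc a b, HasDerivWithinAt U (-q x * U x + r x) (Icc a b) x)
    (hV : ∀ x ∈ Icc a b, HasDerivWithinAt V (-q x * V x + r x) (Icc a b) x) (ha : U a = V a) :
    EqOn U V (Icc a b) := by
  set W := fun x => (U x - V x) / integratingFactor a q x
  have hW : ∀ x ∈ Icc a b, HasDerivWithinAt W 0 (Icc a b) x := by
    intro x hx
    refine (((hU x hx).fun_sub (hV x hx)).div (hasDerivWithinAt_integratingFactor hq hx)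
      (integratingFactor_ne_zero a q x)).congr_deriv ?_
    ring
  intro x hx
  have hconst := constant_of_has_deriv_right_zero (fun y hy => (hW y hy).continuousWithinAt)
    (fun y hy => (hW y (Ico_subset_Icc_self hy)).mono_of_mem_nhdsWithin
      (Icc_mem_nhdsGE_of_mem hy)) x hx
  simpa [W, ha, sub_eq_zero, integratingFactor_ne_zero] using hconst

end LinearODE

section DegenerateKernel

variable {ι : Type*} [Fintype ι] {a b : ℝ} {q : ℝ → ℂ} {h w : ι → ℝ → ℂ}

/-- For `q = (λ + γ' + μ) / γ`, `h = ![g, b1 / γ]` and `w = ![1, b2]` this is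
`!![a1, a2; a3, a4]`. -/
noncomputable def kernelMatrix (a b : ℝ) (q : ℝ → ℂ) (h w : ι → ℝ → ℂ) : Matrix ι ι ℂ :=
  Matrix.of fun i j => -∫ s in a..b, w i s * forcedSolution a q (h j) s

noncomputable def combinedSolution (a : ℝ) (q : ℝ → ℂ) (h : ι → ℝ → ℂ) (c : ι → ℂ) (s : ℝ) : ℂ :=
  ∑ j, c j * forcedSolution a q (h j) s

theorem combinedSolution_self (c : ι → ℂ) : combinedSolution a q h c a = 0 := by
  simp [combinedSolution, forcedSolution_self]

theorem hasDerivWithinAt_combinedSolution (hq : ContinuousOn q (Icc a b))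
    (hh : ∀ j, ContinuousOn (h j) (Icc a b)) (c : ι → ℂ) {x : ℝ} (hx : x ∈ Icc a b) :
    HasDerivWithinAt (combinedSolution a q h c)
      (-q x * combinedSolution a q h c x + ∑ j, c j * h j x) (Icc a b) x := by
  refine (HasDerivWithinAt.fun_sum fun j _ =>
    (hasDerivWithinAt_forcedSolution hq (hh j) hx).const_mul (c j)).congr_deriv ?_
  simp only [combinedSolution, Finset.mul_sum, ← Finset.sum_add_distrib]
  exact Finset.sum_congr rfl fun j _ => by ring

theorem continuousOn_combinedSolution (hq : ContinuousOn q (Icc a b))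
    (hh : ∀ j, ContinuousOn (h j) (Icc a b)) (c : ι → ℂ) :
    ContinuousOn (combinedSolution a q h c) (Icc a b) :=
  fun _ hx => (hasDerivWithinAt_combinedSolution hq hh c hx).continuousWithinAt

theorem integral_mul_combinedSolution (hab : a ≤ b) (hq : ContinuousOn q (Icc a b))
    (hh : ∀ j, ContinuousOn (h j) (Icc a b)) (hw : ∀ i, ContinuousOn (w i) (Icc a b))
    (c : ι → ℂ) (i : ι) :
    ∫ s in a..b, w i s * combinedSolution a q h c s = -(kernelMatrix a b q h w *ᵥ c) i := by
  have hΦ : ∀ j, ContinuousOn (forcedSolution a q (h j)) (Icc a b) := fun j _ hx =>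
    (hasDerivWithinAt_forcedSolution hq (hh j) hx).continuousWithinAt
  simp only [combinedSolution, Finset.mul_sum, Matrix.mulVec, dotProduct, kernelMatrix,
    Matrix.of_apply]
  rw [integral_finsetSum fun j _ =>
    ((hw i).fun_mul ((hΦ j).const_mul (c j))).intervalIntegrable_of_Icc hab]
  simp only [neg_mul, Finset.sum_neg_distrib, neg_neg, ← intervalIntegral.integral_mul_const]
  exact Finset.sum_congr rfl fun j _ => integral_congr fun s _ => by ring

theorem exists_ne_zero_solution_iff_det_eq_zero [DecidableEq ι] (hab : a ≤ b)
    (hq : ContinuousOn q (Icc a b))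
    (hh : ∀ j, ContinuousOn (h j) (Icc a b)) (hw : ∀ i, ContinuousOn (w i) (Icc a b)) :
    (∃ U U' : ℝ → ℂ, ContinuousOn U' (Icc a b) ∧
      (∀ s ∈ Icc a b, HasDerivWithinAt U (U' s) (Icc a b) s) ∧
      (∃ s ∈ Icc a b, U s ≠ 0) ∧ U a = 0 ∧
      ∀ s ∈ Icc a b, U' s = -q s * U s + ∑ j, (∫ y in a..b, w j y * U y) * h j s)
    ↔ (1 + kernelMatrix a b q h w).det = 0 := by
  have hfix : ∀ c : ι → ℂ, (1 + kernelMatrix a b q h w) *ᵥ c = 0 ↔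
      ∀ i, ∫ s in a..b, w i s * combinedSolution a q h c s = c i := by
    intro c
    simp only [Matrix.add_mulVec, Matrix.one_mulVec, add_eq_zero_iff_eq_neg, funext_iff,
      Pi.neg_apply, integral_mul_combinedSolution hab hq hh hw, eq_comm]
  rw [← Matrix.exists_mulVec_eq_zero_iff]
  constructor
  · rintro ⟨U, U', -, hU, ⟨s₀, hs₀, hUs₀⟩, hUa, hode⟩
    set c : ι → ℂ := fun j => ∫ y in a..b, w j y * U y
    have hUc : EqOn U (combinedSolution a q h c) (uIcc a b) := by
      rw [uIcc_of_le hab]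
      exact eqOn_Icc_of_hasDerivWithinAt_linear hq (fun x hx => hode x hx ▸ hU x hx)
        (fun x hx => hasDerivWithinAt_combinedSolution hq hh c hx)
        (hUa.trans (combinedSolution_self c).symm)
    refine ⟨c, fun hc => hUs₀ ?_, (hfix c).2 fun i => ?_⟩
    · rw [hUc (uIcc_of_le hab ▸ hs₀), hc]
      simp [combinedSolution]
    · exact integral_congr fun s hs => by simp only [hUc hs]
  · rintro ⟨c, hc, hAc⟩
    have hint := (hfix c).1 hAc
    refine ⟨combinedSolution a q h c, fun s => -q s * combinedSolution a q h c s + ∑ j, c j * h j s,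
      ?_, fun s hs => hasDerivWithinAt_combinedSolution hq hh c hs, ?_, combinedSolution_self c,
      fun s _ => by simp only [hint]⟩
    · exact (hq.neg.mul (continuousOn_combinedSolution hq hh c)).add
        (continuousOn_finsetSum _ fun j _ => (hh j).const_mul (c j))
    · by_contra! hzero
      refine hc (funext fun i => ?_)
      rw [← hint i, Pi.zero_apply]
      refine (integral_congr fun s hs => ?_).trans integral_zero
      simp [hzero s (uIcc_of_le hab ▸ hs)]

end DegenerateKernel

/-- Characteristic equation for the linearisation with separable fertility:
`λ ∈ ℂ` is an eigenvalue (i.e. the eigenvalue problem has a nontrivial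
continuously differentiable solution `U` with `U(0) = 0`) if and only if the
`2×2` determinant `(1+a1(λ))(1+a4(λ)) − a2(λ)a3(λ)` vanishes. -/
theorem eigenvalue_iff_det_eq_zero (m : ℝ) (hm : 0 < m)
    (γ γ' μ g b1 b2 : ℝ → ℝ)
    (hγd : ∀ s ∈ Icc (0:ℝ) m, HasDerivWithinAt γ (γ' s) (Icc 0 m) s)
    (hγ'c : ContinuousOn γ' (Icc 0 m))
    (hγpos : ∀ s ∈ Icc (0:ℝ) m, 0 < γ s)
    (hμc : ContinuousOn μ (Icc 0 m))
    (hgc : ContinuousOn g (Icc 0 m))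
    (hb1c : ContinuousOn b1 (Icc 0 m))
    (hb2c : ContinuousOn b2 (Icc 0 m))
    (lam : ℂ)
    (F : ℝ → ℂ)
    (hF : ∀ s, F s = Complex.exp
      (-∫ y in (0:ℝ)..s, (lam + (γ' y : ℂ) + (μ y : ℂ)) / (γ y : ℂ)))
    (a1 a2 a3 a4 : ℂ)
    (ha1 : a1 = -∫ s in (0:ℝ)..m, F s * ∫ y in (0:ℝ)..s, (g y : ℂ) / F y)
    (ha2 : a2 = -∫ s in (0:ℝ)..m, F s * ∫ y in (0:ℝ)..s,
      (b1 y : ℂ) / ((γ y : ℂ) * F y))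
    (ha3 : a3 = -∫ s in (0:ℝ)..m, (b2 s : ℂ) * F s *
      ∫ y in (0:ℝ)..s, (g y : ℂ) / F y)
    (ha4 : a4 = -∫ s in (0:ℝ)..m, (b2 s : ℂ) * F s *
      ∫ y in (0:ℝ)..s, (b1 y : ℂ) / ((γ y : ℂ) * F y)) :
    (∃ U U' : ℝ → ℂ, ContinuousOn U' (Icc 0 m) ∧
      (∀ s ∈ Icc (0:ℝ) m, HasDerivWithinAt U (U' s) (Icc 0 m) s) ∧
      (∃ s ∈ Icc (0:ℝ) m, U s ≠ 0) ∧
      U 0 = 0 ∧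
      (∀ s ∈ Icc (0:ℝ) m,
        (γ s : ℂ) * U' s + (lam + (γ' s : ℂ) + (μ s : ℂ)) * U s
          = (γ s : ℂ) * (g s : ℂ) * (∫ y in (0:ℝ)..m, U y)
            + (b1 s : ℂ) * ∫ y in (0:ℝ)..m, (b2 y : ℂ) * U y))
    ↔ (1 + a1) * (1 + a4) - a2 * a3 = 0 := by
  have hγc : ContinuousOn γ (Icc 0 m) := fun s hs => (hγd s hs).continuousWithinAt
  have hγ0 : ∀ s ∈ Icc (0:ℝ) m, (γ s : ℂ) ≠ 0 := fun s hs => by exact_mod_cast (hγpos s hs).ne'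
  set q : ℝ → ℂ := fun y => (lam + (γ' y : ℂ) + (μ y : ℂ)) / (γ y : ℂ) with hq_def
  obtain rfl : F = integratingFactor 0 q := funext hF
  have hq : ContinuousOn q (Icc 0 m) := by fun_prop (disch := assumption)
  have key := exists_ne_zero_solution_iff_det_eq_zero (q := q)
    (h := ![fun y => (g y : ℂ), fun y => (b1 y : ℂ) / (γ y : ℂ)])
    (w := ![fun _ => 1, fun y => (b2 y : ℂ)]) hm.le hq
    (Fin.forall_fin_two.2 ⟨(by fun_prop : ContinuousOn (fun y => (g y : ℂ)) _),
      (by fun_prop (disch := assumption) : ContinuousOn (fun y => (b1 y : ℂ) / (γ y : ℂ)) _)⟩)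
    (Fin.forall_fin_two.2
      ⟨continuousOn_const, (by fun_prop : ContinuousOn (fun y => (b2 y : ℂ)) _)⟩)
  refine (exists_congr fun U => exists_congr fun U' => and_congr_right' <| and_congr_right' <|
    and_congr_right' <| and_congr_right' <| forall₂_congr fun s hs => ?_).trans (key.trans ?_)
  · simp only [Fin.sum_univ_two, Matrix.cons_val_zero, Matrix.cons_val_one, one_mul, hq_def]
    have hγs := hγ0 s hs
    constructor <;> intro hode
    · apply mul_left_cancel₀ hγs
      field_simp
      linear_combination hode
    · rw [hode]
      field_simp
      ring
  · simp [Matrix.det_fin_two, kernelMatrix, forcedSolution, ha1, ha2, ha3, ha4, div_div, mul_assoc]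
end
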